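/- Let F be a field of characteristic p > 0 and β ∈ F^× not a p-th power. Then the polynomial t^p − β(x^p − β)^p ∈ F[x,t] is irreducible, and the quotient ring R' = F[x,t]/(t^p − β(x^p − β)^p) embeds into F̃[u] (where F̃ = F(β^{1/p})) via x ↦ β^{1/p} + u, t ↦ β^{1/p} u^p; this embedding becomes an isomorphism after inverting s = x^p − β, identifying the normalization of R' with F̃[u]. -/

import Mathlib

/-!
Over `K` the map `x ↦ α + u, t ↦ α u^p` kills `t^p − β(x^p − β)^p`, because `(α + u)^p − β = u^p`.
In `F[x][t]` this polynomial is monic of degree `p` in `t`, so the kernel is generated by it as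
soon as no nonzero `r` of `t`-degree `< p` is killed. Give `x^i t^j` the weight `i + p j`, the
`u`-degree of its image: the coefficient of the top power of `u` in the image of `r` is
`∑ lc(r_j) α^j` over the `j` of maximal weight, which is nonzero because `1, α, …, α^(p-1)` are
linearly independent over `F`. The kernel is prime since `K[u]` is a domain, so the polynomial is
irreducible. Finally `s ↦ u^p`, `x s − t ↦ u^(p+1)` and `t ↦ α u^p`, so `u` and `α` land in the
image after multiplication by a power of `s`, and they generate `K[u]` over `F`.
-/

noncomputable section

/-- The polynomial `t^p − β(x^p − β)^p ∈ F[x,t]`, with `x = X 0` and `t = X 1`. -/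
def peculiarPoly (F : Type*) [Field F] (p : ℕ) (β : F) : MvPolynomial (Fin 2) F :=
  MvPolynomial.X 1 ^ p -
    MvPolynomial.C β * (MvPolynomial.X 0 ^ p - MvPolynomial.C β) ^ p

/-- The `F`-algebra map `F[x,t] → F̃[u]` given by `x ↦ β^{1/p} + u`, `t ↦ β^{1/p}·u^p`,
where `F̃ = F(α)` with `α = β^{1/p}`. -/
def peculiarEval (F K : Type*) [Field F] [Field K] [Algebra F K] (p : ℕ) (α : K) :
    MvPolynomial (Fin 2) F →ₐ[F] Polynomial K :=
  MvPolynomial.aeval (fun i : Fin 2 =>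
    if i = 0 then Polynomial.C α + Polynomial.X else Polynomial.C α * Polynomial.X ^ p)

open Polynomial Polynomial.Bivariate

theorem Polynomial.coeff_taylor_of_natDegree_le {A : Type*} [CommSemiring A] {f : A[X]} {n : ℕ}
    (h : f.natDegree ≤ n) (r : A) : (taylor r f).coeff n = f.coeff n := by
  rcases h.lt_or_eq with h | rfl
  · rw [coeff_eq_zero_of_natDegree_lt h,
      coeff_eq_zero_of_natDegree_lt (by rwa [natDegree_taylor])]
  · exact coeff_taylor_natDegree r f

theorem Polynomial.aeval_C_add_X {R A : Type*} [CommRing R] [CommRing A] [Algebra R A]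
    (a : A) (q : R[X]) : aeval (C a + X) q = taylor a (q.map (algebraMap R A)) := by
  rw [taylor_apply, comp, eval₂_map, aeval_def, add_comm]
  rfl

section Bivariate

variable (R A : Type*) [CommRing R] [CommRing A] [Algebra R A] (p : ℕ)

def bivariatePeculiarEval (a : A) : R[X][Y] →ₐ[R] A[X] :=
  aevalAeval (C a + X) (C a * X ^ p)

def bivariatePeculiarPoly (b : R) : R[X][Y] :=
  (Y : R[X][Y]) ^ p - C (C b * (X ^ p - C b) ^ p)

variable {R A p}

@[simp]
theorem bivariatePeculiarEval_C (a : A) (q : R[X]) :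
    bivariatePeculiarEval R A p a (C q) = aeval (C a + X) q :=
  aevalAeval_C _ _ q

@[simp]
theorem bivariatePeculiarEval_Y (a : A) :
    bivariatePeculiarEval R A p a Y = C a * X ^ p :=
  aevalAeval_Y _ _

theorem bivariatePeculiarEval_apply (a : A) (r : R[X][Y]) :
    bivariatePeculiarEval R A p a r =
      ∑ j ∈ r.support, C (a ^ j) * (taylor a ((r.coeff j).map (algebraMap R A)) * X ^ (p * j)) := by
  conv_lhs => rw [r.as_sum_support_C_mul_X_pow]
  rw [map_sum]
  refine Finset.sum_congr rfl fun j _ => ?_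
  rw [map_mul, map_pow, bivariatePeculiarEval_C, bivariatePeculiarEval_Y, aeval_C_add_X, mul_pow,
    C_pow, pow_mul]
  ring

theorem coeff_bivariatePeculiarEval {a : A} {r : R[X][Y]} {d : ℕ}
    (hd : ∀ j ∈ r.support, (r.coeff j).natDegree + p * j ≤ d) :
    (bivariatePeculiarEval R A p a r).coeff d =
      aeval a (∑ j ∈ r.support, monomial j ((r.coeff j).coeff (d - p * j))) := by
  simp only [bivariatePeculiarEval_apply, finsetSum_coeff, coeff_C_mul, map_sum, aeval_monomial]
  refine Finset.sum_congr rfl fun j hj => ?_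
  obtain ⟨e, he, rfl⟩ : ∃ e, (r.coeff j).natDegree ≤ e ∧ d = e + p * j :=
    ⟨d - p * j, by have := hd j hj; omega, by have := hd j hj; omega⟩
  rw [coeff_mul_X_pow, Nat.add_sub_cancel, coeff_taylor_of_natDegree_le
    ((natDegree_map_le).trans he), coeff_map, mul_comm]

theorem bivariatePeculiarEval_ne_zero {a : A}
    (ha : ∀ q : R[X], q ≠ 0 → q.natDegree < p → aeval a q ≠ 0)
    {r : R[X][Y]} (hr : r ≠ 0) (hrp : r.natDegree < p) : bivariatePeculiarEval R A p a r ≠ 0 := by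
  have hsupp : r.support.Nonempty := nonempty_support_iff.2 hr
  -- `D j` is the `u`-degree of the image of the `t^j`-term of `r`
  set D : ℕ → ℕ := fun j => (r.coeff j).natDegree + p * j
  obtain ⟨j₀, hj₀, hD⟩ := Finset.exists_mem_eq_sup' hsupp D
  set q : R[X] := ∑ j ∈ r.support, monomial j ((r.coeff j).coeff (D j₀ - p * j))
  have hq : q.coeff j₀ = (r.coeff j₀).leadingCoeff := by
    simp only [q, finsetSum_coeff, coeff_monomial, Finset.sum_ite_eq', if_pos hj₀, D,
      Nat.add_sub_cancel, leadingCoeff]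
  have hq₀ : q ≠ 0 := fun h => by
    rw [h, coeff_zero, eq_comm, leadingCoeff_eq_zero] at hq
    exact mem_support_iff.1 hj₀ hq
  have hqp : q.natDegree < p := by
    refine lt_of_le_of_lt (natDegree_sum_le_of_forall_le _ _ fun j hj => ?_) hrp
    exact (natDegree_monomial_le _).trans (le_natDegree_of_mem_supp j hj)
  intro h
  refine ha q hq₀ hqp ?_
  rw [← coeff_bivariatePeculiarEval fun j hj => hD ▸ Finset.le_sup' D hj, h, coeff_zero]

theorem aeval_C_add_X_X_pow_sub_C [Fact p.Prime] [CharP A p] {a : A} {b : R}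
    (hab : a ^ p = algebraMap R A b) : aeval (C a + X) (X ^ p - C b) = X ^ p := by
  rw [map_sub, map_pow, aeval_X, aeval_C, add_pow_char, ← C_pow, hab, Polynomial.algebraMap_apply,
    add_sub_cancel_left]

theorem bivariatePeculiarEval_bivariatePeculiarPoly [Fact p.Prime] [CharP A p] {a : A} {b : R}
    (hab : a ^ p = algebraMap R A b) :
    bivariatePeculiarEval R A p a (bivariatePeculiarPoly R p b) = 0 := by
  rw [bivariatePeculiarPoly, map_sub, map_pow, bivariatePeculiarEval_Y, bivariatePeculiarEval_C,
    map_mul, map_pow, aeval_C_add_X_X_pow_sub_C hab, aeval_C, Polynomial.algebraMap_apply, ← hab,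
    C_pow]
  ring

theorem monic_bivariatePeculiarPoly [Nontrivial R] (hp : p ≠ 0) (b : R) :
    (bivariatePeculiarPoly R p b).Monic :=
  monic_X_pow_sub_C _ hp

theorem degree_bivariatePeculiarPoly [Nontrivial R] (hp : 0 < p) (b : R) :
    (bivariatePeculiarPoly R p b).degree = p :=
  degree_X_pow_sub_C hp _

theorem ker_bivariatePeculiarEval [Nontrivial R] [Fact p.Prime] [CharP A p] {a : A} {b : R}
    (hab : a ^ p = algebraMap R A b)
    (ha : ∀ q : R[X], q ≠ 0 → q.natDegree < p → aeval a q ≠ 0) :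
    RingHom.ker (bivariatePeculiarEval R A p a) = Ideal.span {bivariatePeculiarPoly R p b} := by
  have hp : p.Prime := Fact.out
  have hf := monic_bivariatePeculiarPoly hp.ne_zero (R := R) b
  have hψf := bivariatePeculiarEval_bivariatePeculiarPoly hab
  ext r
  rw [RingHom.mem_ker, Ideal.mem_span_singleton]
  refine ⟨fun h => ?_, fun ⟨c, hc⟩ => by rw [hc, map_mul, hψf, zero_mul]⟩
  rw [← modByMonic_eq_zero_iff_dvd hf]
  by_contra hne
  refine bivariatePeculiarEval_ne_zero ha hne ?_ ?_
  · rw [natDegree_lt_iff_degree_lt hne, ← degree_bivariatePeculiarPoly hp.pos b]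
    exact degree_modByMonic_lt r hf
  · rw [modByMonic_eq_sub_mul_div, map_sub, map_mul, h, hψf, zero_mul, sub_zero]

end Bivariate

section Peculiar

variable {F K : Type*} [Field F] [Field K] [Algebra F K] {p : ℕ} {β : F} {α : K}

theorem aeval_ne_zero_of_natDegree_lt [Fact p.Prime] (hβp : ∀ γ : F, γ ^ p ≠ β)
    (hα : α ^ p = algebraMap F K β) {q : F[X]} (hq : q ≠ 0) (hqp : q.natDegree < p) :
    aeval α q ≠ 0 := by
  have hp : p.Prime := Fact.out
  have hmin : minpoly F α = X ^ p - C β :=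
    (minpoly.eq_of_irreducible_of_monic (X_pow_sub_C_irreducible_of_prime hp hβp)
      (by simp [hα]) (monic_X_pow_sub_C β hp.ne_zero)).symm
  intro h
  have hle := minpoly.degree_le_of_ne_zero F α hq h
  rw [hmin, degree_X_pow_sub_C hp.pos] at hle
  exact hle.not_gt ((natDegree_lt_iff_degree_lt hq).1 hqp)

theorem peculiarEval_comp_equivMvPolynomial :
    (peculiarEval F K p α).comp (equivMvPolynomial F : F[X][Y] →ₐ[F] MvPolynomial (Fin 2) F) =
      bivariatePeculiarEval F K p α := by
  ext <;> simp [peculiarEval, bivariatePeculiarEval]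

theorem equivMvPolynomial_bivariatePeculiarPoly :
    equivMvPolynomial F (bivariatePeculiarPoly F p β) = peculiarPoly F p β := by
  simp [bivariatePeculiarPoly, peculiarPoly]

theorem peculiarPoly_ne_zero (hp : p ≠ 0) : peculiarPoly F p β ≠ 0 := by
  rw [← equivMvPolynomial_bivariatePeculiarPoly, map_ne_zero_iff _ (equivMvPolynomial F).injective]
  exact (monic_bivariatePeculiarPoly hp β).ne_zero

theorem ker_peculiarEval [Fact p.Prime] [CharP K p] (hβp : ∀ γ : F, γ ^ p ≠ β)
    (hα : α ^ p = algebraMap F K β) :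
    RingHom.ker (peculiarEval F K p α).toRingHom = Ideal.span {peculiarPoly F p β} := by
  ext r
  obtain ⟨r, rfl⟩ := (equivMvPolynomial F).surjective r
  rw [RingHom.mem_ker, Ideal.mem_span_singleton, ← equivMvPolynomial_bivariatePeculiarPoly,
    map_dvd_iff, ← Ideal.mem_span_singleton,
    ← ker_bivariatePeculiarEval hα fun q hq hqp => aeval_ne_zero_of_natDegree_lt hβp hα hq hqp,
    RingHom.mem_ker, ← peculiarEval_comp_equivMvPolynomial]
  rfl

@[simp]
theorem peculiarEval_X_zero : peculiarEval F K p α (MvPolynomial.X 0) = C α + X := by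
  simp [peculiarEval]

@[simp]
theorem peculiarEval_X_one : peculiarEval F K p α (MvPolynomial.X 1) = C α * X ^ p := by
  simp [peculiarEval]

theorem peculiarEval_X_zero_pow_sub_C [Fact p.Prime] [CharP K p]
    (hα : α ^ p = algebraMap F K β) :
    peculiarEval F K p α (MvPolynomial.X 0 ^ p - MvPolynomial.C β) = X ^ p := by
  rw [← aeval_C_add_X_X_pow_sub_C hα]
  simp [peculiarEval]

theorem exists_mul_pow_eq_peculiarEval [Fact p.Prime] [CharP K p]
    (hα : α ^ p = algebraMap F K β) (hgen : Algebra.adjoin F {α} = ⊤) (g : K[X]) :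
    ∃ (n : ℕ) (r : MvPolynomial (Fin 2) F),
      g * (peculiarEval F K p α (MvPolynomial.X 0 ^ p - MvPolynomial.C β)) ^ n =
        peculiarEval F K p α r := by
  have hs := peculiarEval_X_zero_pow_sub_C hα
  set T := (peculiarEval F K p α).range.saturation (Submonoid.powers (X ^ p))
    (Submonoid.powers_le.2 ⟨_, hs⟩)
  have hX : X ∈ T := ⟨X ^ p, Submonoid.mem_powers _, by
    convert AlgHom.mem_range_self (peculiarEval F K p α)
      (MvPolynomial.X 0 * (MvPolynomial.X 0 ^ p - MvPolynomial.C β) - MvPolynomial.X 1) using 1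
    rw [map_sub, map_mul, hs, peculiarEval_X_zero, peculiarEval_X_one]
    ring⟩
  have hC : ∀ c : K, C c ∈ T := by
    suffices Algebra.adjoin F {α} ≤ T.comap (CAlgHom : K →ₐ[F] K[X]) from
      fun c => this (hgen ▸ trivial)
    refine Algebra.adjoin_le (Set.singleton_subset_iff.2 ⟨X ^ p, Submonoid.mem_powers _, ?_⟩)
    change X ^ p * C α ∈ (peculiarEval F K p α).range
    rw [mul_comm, ← peculiarEval_X_one (F := F)]
    exact AlgHom.mem_range_self _ _
  have hT : g ∈ T := by
    induction g using Polynomial.induction_on' with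
    | add f g hf hg => exact T.add_mem hf hg
    | monomial n c => exact C_mul_X_pow_eq_monomial (R := K) ▸ T.mul_mem (hC c) (T.pow_mem hX n)
  obtain ⟨_, ⟨n, rfl⟩, hr⟩ := hT
  obtain ⟨r, hr⟩ := (AlgHom.mem_range _).1 hr
  exact ⟨n, r, by rw [hs, hr]; exact mul_comm _ _⟩

end Peculiar

theorem peculiar_poly_irreducible_ker_localization_general (F K : Type*) [Field F] [Field K]
    [Algebra F K] (p : ℕ) [Fact p.Prime] [CharP F p]
    (β : F) (hβp : ∀ γ : F, γ ^ p ≠ β)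
    (α : K) (hα : α ^ p = algebraMap F K β)
    (hgen : IntermediateField.adjoin F {α} = ⊤) :
    Irreducible (peculiarPoly F p β) ∧
    RingHom.ker (peculiarEval F K p α).toRingHom = Ideal.span {peculiarPoly F p β} ∧
    ∀ g : Polynomial K, ∃ (n : ℕ) (r : MvPolynomial (Fin 2) F),
      g * (peculiarEval F K p α (MvPolynomial.X 0 ^ p - MvPolynomial.C β)) ^ n =
        peculiarEval F K p α r := by
  have : CharP K p := charP_of_injective_algebraMap (algebraMap F K).injective p
  have hp : p.Prime := Fact.out
  have hker := ker_peculiarEval hβp hα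
  have hprime : Prime (peculiarPoly F p β) := by
    rw [← Ideal.span_singleton_prime (peculiarPoly_ne_zero hp.ne_zero), ← hker]
    exact RingHom.ker_isPrime _
  have hadjoin : Algebra.adjoin F {α} = ⊤ := by
    have hint : IsIntegral F α := ⟨X ^ p - C β, monic_X_pow_sub_C β hp.ne_zero, by simp [hα]⟩
    rw [← IntermediateField.adjoin_simple_toSubalgebra_of_isAlgebraic hint.isAlgebraic, hgen,
      IntermediateField.top_toSubalgebra]
  exact ⟨hprime.irreducible, hker, exists_mul_pow_eq_peculiarEval hα hadjoin⟩

/-- Let `F` be a field of characteristic `p > 0` and `β ∈ F^×` not a `p`-th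
power.  Then `t^p − β(x^p − β)^p ∈ F[x,t]` is irreducible, and the quotient
`R' = F[x,t]/(t^p − β(x^p − β)^p)` embeds into `F̃[u]` (where `F̃ = F(β^{1/p})`) via
`x ↦ β^{1/p} + u`, `t ↦ β^{1/p} u^p` (i.e. the kernel of the evaluation map is exactly the
ideal `(t^p − β(x^p − β)^p)`); this embedding becomes an isomorphism after inverting
`s = x^p − β`, identifying the normalization of `R'` with `F̃[u]`. -/
theorem peculiar_poly_irreducible_ker_localization (F K : Type*) [Field F] [Field K]
    [Algebra F K] (p : ℕ) [Fact p.Prime] [CharP F p]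
    (β : F) (hβ : β ≠ 0) (hβp : ∀ γ : F, γ ^ p ≠ β)
    (α : K) (hα : α ^ p = algebraMap F K β)
    (hgen : IntermediateField.adjoin F {α} = ⊤) :
    Irreducible (peculiarPoly F p β) ∧
    RingHom.ker (peculiarEval F K p α).toRingHom = Ideal.span {peculiarPoly F p β} ∧
    ∀ g : Polynomial K, ∃ (n : ℕ) (r : MvPolynomial (Fin 2) F),
      g * (peculiarEval F K p α (MvPolynomial.X 0 ^ p - MvPolynomial.C β)) ^ n =
        peculiarEval F K p α r :=
  peculiar_poly_irreducible_ker_localization_general F K p β hβp α hα hgen
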